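/- arXiv:2108.07956 — 12 statements merged into one kernel-verified Lean document; each statement's English description precedes it below -/
import Mathlib

section
/- Let B be an H₂-convex subset of an H₂-module X. Then for each i ∈ Fin 4: (i) the set eᵢB = {eᵢ • b : b ∈ B} is convex as a subset of X regarded as a real vector space; (ii) if 0 ∈ B, then eᵢB ⊆ B. -/
open Pointwise

/-- The ring of bihyperbolic numbers in its idempotent representation:
componentwise operations on `Fin 4 → ℝ`. -/
abbrev D : Type := Fin 4 → ℝ

/-- The idempotents `eᵢ`. -/
noncomputable def e (i : Fin 4) : D := Pi.single i 1

/-- The bihyperbolic-valued modulus: componentwise absolute value. -/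
def dabs (a : D) : D := fun i => |a i|

/-- Strict componentwise inequality `a ≺ b`. -/
def sLt (a b : D) : Prop := ∀ i, a i < b i

/-- The ring homomorphism `ℝ → D` sending `r` to the constant function `r`. -/
def rconst (a : ℝ) : D := fun _ => a

/-- A set `B` in an `H₂`-module is `H₂`-balanced if `c • x ∈ B` whenever
`x ∈ B` and `|c| ⪯ 1`. -/
def H2Balanced {X : Type*} [AddCommGroup X] [Module D X] (B : Set X) : Prop :=
  ∀ x ∈ B, ∀ c : D, dabs c ≤ 1 → c • x ∈ B

/-- A set `B` in an `H₂`-module is `H₂`-convex if `c • x + (1 - c) • y ∈ B`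
for all `x, y ∈ B` and `0 ⪯ c ⪯ 1`. -/
def H2Convex {X : Type*} [AddCommGroup X] [Module D X] (B : Set X) : Prop :=
  ∀ x ∈ B, ∀ y ∈ B, ∀ c : D, 0 ≤ c → c ≤ 1 → c • x + (1 - c) • y ∈ B

/-- A set `B` in an `H₂`-module is `H₂`-absorbing if every `x` admits `ε ≻ 0`
with `c • x ∈ B` whenever `0 ⪯ c ⪯ ε`. -/
def H2Absorbing {X : Type*} [AddCommGroup X] [Module D X] (B : Set X) : Prop :=
  ∀ x : X, ∃ ε : D, sLt 0 ε ∧ ∀ c : D, 0 ≤ c → c ≤ ε → c • x ∈ B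

/-- An `H₂`-valued seminorm. -/
def IsH2Seminorm {X : Type*} [AddCommGroup X] [Module D X] (p : X → D) : Prop :=
  (∀ c : D, ∀ x : X, p (c • x) = dabs c * p x) ∧ ∀ x y : X, p (x + y) ≤ p x + p y

/-- An `H₂`-valued norm. -/
def IsH2Norm {X : Type*} [AddCommGroup X] [Module D X] (N : X → D) : Prop :=
  (∀ x : X, N x = 0 ↔ x = 0) ∧ (∀ c : D, ∀ x : X, N (c • x) = dabs c * N x) ∧
    ∀ x y : X, N (x + y) ≤ N x + N y

/-- A subset of a topological `H₂`-module is bounded if every neighbourhood of `0`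
absorbs it. -/
def H2Bounded {X : Type*} [AddCommGroup X] [Module D X] [TopologicalSpace X]
    (B : Set X) : Prop :=
  ∀ U ∈ nhds (0 : X), ∃ c : D, sLt 0 c ∧ B ⊆ c • U

/-- The `H₂`-valued Minkowski functional of a set `B`, defined componentwise. -/
noncomputable def minkowski {X : Type*} [AddCommGroup X] [Module D X]
    (B : Set X) (x : X) : D :=
  fun i => sInf {t : ℝ | ∃ α : D, sLt 0 α ∧ x ∈ α • B ∧ α i = t}
/-- For an `H₂`-convex set `B` and each idempotent `eᵢ`: (i) `eᵢB` is convex as a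
subset of `X` regarded as a real vector space; (ii) if `0 ∈ B` then `eᵢB ⊆ B`. -/
theorem convex_components {X : Type*} [AddCommGroup X] [Module D X]
    (B : Set X) (hB : H2Convex B) (i : Fin 4) :
    (∀ x ∈ e i • B, ∀ y ∈ e i • B, ∀ a b : ℝ, 0 ≤ a → 0 ≤ b → a + b = 1 →
        rconst a • x + rconst b • y ∈ e i • B) ∧
      ((0 : X) ∈ B → e i • B ⊆ B) := by
  constructor
  · rintro x ⟨bx, hbx, rfl⟩ y ⟨by', hby, rfl⟩ a b ha hb hab
    set c : D := fun j => if j = i then a else 1 with hc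
    have h0 : (0 : D) ≤ c := by
      intro j; by_cases h : j = i <;> simp [hc, h, ha]
    have h1 : c ≤ 1 := by
      intro j; by_cases h : j = i <;> simp [hc, h]; linarith
    have hz := hB bx hbx by' hby c h0 h1
    refine ⟨_, hz, ?_⟩
    show e i • (c • bx + (1 - c) • by') = rconst a • (e i • bx) + rconst b • (e i • by')
    rw [smul_add, smul_smul, smul_smul, smul_smul, smul_smul]
    congr 1
    · congr 1
      funext j
      by_cases h : j = i <;>
        simp [hc, e, rconst, Pi.single_apply, h, mul_comm]
    · congr 1
      funext j
      by_cases h : j = i <;>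
        simp [hc, e, rconst, Pi.single_apply, h, mul_comm]
      linarith
  · rintro h0 x ⟨bx, hbx, heq⟩
    have h0e : (0 : D) ≤ e i := by
      intro j; by_cases h : j = i <;> simp [e, Pi.single_apply, h]
    have h1e : e i ≤ 1 := by
      intro j; by_cases h : j = i <;> simp [e, Pi.single_apply, h]
    have := hB bx hbx 0 h0 (e i) h0e h1e
    exact heq ▸ (by simpa using this)
end

section
/- Let B be an H₂-convex subset of an H₂-module X. Then B can be written as the Minkowski sum of its idempotent components: B = e₁B + e₂B + e₃B + e₄B, i.e. B = {x₁ + x₂ + x₃ + x₄ : xᵢ ∈ eᵢB for each i}. -/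
open Pointwise

lemma esum : e 0 + e 1 + e 2 + e 3 = (1 : D) := by
  funext i; fin_cases i <;> simp [e, Pi.single_apply]

/-- An `H₂`-convex set `B` equals the Minkowski sum of its idempotent components:
`B = e₁B + e₂B + e₃B + e₄B`. -/
theorem convex_eq_sum_components {X : Type*} [AddCommGroup X] [Module D X]
    (B : Set X) (hB : H2Convex B) :
    B = e 0 • B + e 1 • B + e 2 • B + e 3 • B := by
  ext x
  constructor
  · intro hx
    have hx4 : x = e 0 • x + e 1 • x + e 2 • x + e 3 • x := by
      rw [← add_smul, ← add_smul, ← add_smul, esum, one_smul]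
    rw [hx4]
    exact Set.add_mem_add (Set.add_mem_add (Set.add_mem_add
      (Set.smul_mem_smul_set hx) (Set.smul_mem_smul_set hx))
      (Set.smul_mem_smul_set hx)) (Set.smul_mem_smul_set hx)
  · intro hx
    simp only [Set.mem_add, Set.mem_smul_set] at hx
    obtain ⟨_, ⟨_, ⟨_, ⟨b0, hb0, rfl⟩, _, ⟨b1, hb1, rfl⟩, rfl⟩, _, ⟨b2, hb2, rfl⟩, rfl⟩,
      _, ⟨b3, hb3, rfl⟩, rfl⟩ := hx
    have h0 : (0:D) ≤ e 0 ∧ e 0 ≤ 1 := by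
      constructor <;> intro i <;> fin_cases i <;> simp [e, Pi.single_apply]
    have h01 : (0:D) ≤ e 0 + e 1 ∧ e 0 + e 1 ≤ 1 := by
      constructor <;> intro i <;> fin_cases i <;> simp [e, Pi.single_apply]
    have h012 : (0:D) ≤ e 0 + e 1 + e 2 ∧ e 0 + e 1 + e 2 ≤ 1 := by
      constructor <;> intro i <;> fin_cases i <;> simp [e, Pi.single_apply]
    have hy1 := hB b0 hb0 b1 hb1 (e 0) h0.1 h0.2
    have hy2 := hB _ hy1 b2 hb2 (e 0 + e 1) h01.1 h01.2
    have hy3 := hB _ hy2 b3 hb3 (e 0 + e 1 + e 2) h012.1 h012.2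
    have key : (e 0 + e 1 + e 2) • ((e 0 + e 1) • (e 0 • b0 + (1 - e 0) • b1)
        + (1 - (e 0 + e 1)) • b2) + (1 - (e 0 + e 1 + e 2)) • b3
        = e 0 • b0 + e 1 • b1 + e 2 • b2 + e 3 • b3 := by
      simp only [smul_add, smul_smul]
      have m1 : (e 0 + e 1 + e 2) * ((e 0 + e 1) * e 0) = e 0 := by
        funext i; fin_cases i <;> simp [e, Pi.single_apply]
      have m2 : (e 0 + e 1 + e 2) * ((e 0 + e 1) * (1 - e 0)) = e 1 := by
        funext i; fin_cases i <;> simp [e, Pi.single_apply]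
      have m3 : (e 0 + e 1 + e 2) * (1 - (e 0 + e 1)) = e 2 := by
        funext i; fin_cases i <;> simp [e, Pi.single_apply]
      have m4 : (1 : D) - (e 0 + e 1 + e 2) = e 3 := by
        funext i; fin_cases i <;> simp [e, Pi.single_apply]
      rw [m1, m2, m3, m4]
    rw [key] at hy3
    exact hy3
end

section
/- Let X be an H₂-module and B ⊆ X. If for each i ∈ Fin 4 the set eᵢB = {eᵢ • b : b ∈ B} is convex as a subset of X regarded as a real vector space, then the Minkowski sum e₁B + e₂B + e₃B + e₄B is an H₂-convex subset of X. -/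
open Pointwise

lemma smul_mem_e_smul {X : Type*} [AddCommGroup X] [Module D X] {B : Set X}
    (i : Fin 4) (c : D) {p : X} (hp : p ∈ e i • B) : c • p = rconst (c i) • p := by
  obtain ⟨b, _, rfl⟩ := hp
  rw [smul_smul, smul_smul]
  congr 1
  funext j
  by_cases hj : j = i <;>
    simp [e, rconst, Pi.single_apply, hj, mul_comm]

lemma step {X : Type*} [AddCommGroup X] [Module D X] {B : Set X}
    (h : ∀ i : Fin 4, ∀ x ∈ e i • B, ∀ y ∈ e i • B, ∀ a b : ℝ,
      0 ≤ a → 0 ≤ b → a + b = 1 → rconst a • x + rconst b • y ∈ e i • B)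
    (i : Fin 4) {p q : X} (hp : p ∈ e i • B) (hq : q ∈ e i • B)
    (c : D) (h0 : 0 ≤ c) (h1 : c ≤ 1) :
    c • p + (1 - c) • q ∈ e i • B := by
  have h0i : (0:ℝ) ≤ c i := h0 i
  have h1i : c i ≤ 1 := h1 i
  rw [smul_mem_e_smul i c hp, smul_mem_e_smul i (1 - c) hq]
  have : (1 - c) i = 1 - c i := rfl
  rw [this]
  exact h i p hp q hq (c i) (1 - c i) h0i (by linarith) (by ring)

/-- If each idempotent component `eᵢB` is convex as a subset of `X` regarded as a
real vector space, then the Minkowski sum `e₁B + e₂B + e₃B + e₄B` is `H₂`-convex. -/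
theorem sum_components_convex {X : Type*} [AddCommGroup X] [Module D X]
    (B : Set X)
    (h : ∀ i : Fin 4, ∀ x ∈ e i • B, ∀ y ∈ e i • B, ∀ a b : ℝ,
      0 ≤ a → 0 ≤ b → a + b = 1 → rconst a • x + rconst b • y ∈ e i • B) :
    H2Convex (e 0 • B + e 1 • B + e 2 • B + e 3 • B) := by
  intro x hx y hy c h0 h1
  obtain ⟨x', ⟨x'', ⟨x0, hx0, x1, hx1, rfl⟩, x2, hx2, rfl⟩, x3, hx3, rfl⟩ := hx
  obtain ⟨y', ⟨y'', ⟨y0, hy0, y1, hy1, rfl⟩, y2, hy2, rfl⟩, y3, hy3, rfl⟩ := hy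
  have key : c • (x0 + x1 + x2 + x3) + (1 - c) • (y0 + y1 + y2 + y3)
      = ((c • x0 + (1 - c) • y0) + (c • x1 + (1 - c) • y1)
        + (c • x2 + (1 - c) • y2)) + (c • x3 + (1 - c) • y3) := by
    simp only [smul_add]; abel
  rw [key]
  exact Set.add_mem_add (Set.add_mem_add (Set.add_mem_add
    (step h 0 hx0 hy0 c h0 h1) (step h 1 hx1 hy1 c h0 h1))
    (step h 2 hx2 hy2 c h0 h1)) (step h 3 hx3 hy3 c h0 h1)
end

section
/- Let B be an H₂-convex set in a topological H₂-module X. Then both the interior of B and the closure of B are H₂-convex sets. -/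
open Pointwise

section AffineCombination

variable {R M : Type*} [Semiring R] [AddCommGroup M] [Module R M] [TopologicalSpace M]
  [ContinuousAdd M] {B : Set M} {a b : R}

theorem smul_add_smul_mem_interior (hab : a + b = 1)
    (hB : ∀ x ∈ B, ∀ y ∈ B, a • x + b • y ∈ B) {x y : M}
    (hx : x ∈ interior B) (hy : y ∈ interior B) : a • x + b • y ∈ interior B := by
  set W := (x + ·) ⁻¹' interior B ∩ (y + ·) ⁻¹' interior B
  have hW : IsOpen W :=
    (isOpen_interior.preimage (continuous_const_add x)).inter
      (isOpen_interior.preimage (continuous_const_add y))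
  have h0W : (0 : M) ∈ W := by simpa [W] using And.intro hx hy
  -- As `a + b = 1`, the combination commutes with translation, so `(a • x + b • y) +ᵥ W ⊆ B`.
  refine interior_maximal ?_ (hW.vadd (a • x + b • y)) ⟨0, h0W, by simp⟩
  rintro _ ⟨z, ⟨hxz, hyz⟩, rfl⟩
  have hcomb : a • (x + z) + b • (y + z) = a • x + b • y + z := by
    rw [smul_add, smul_add, add_add_add_comm, ← add_smul, hab, one_smul]
  change a • x + b • y + z ∈ B
  rw [← hcomb]
  exact hB _ (interior_subset hxz) _ (interior_subset hyz)

theorem smul_add_smul_mem_closure [ContinuousConstSMul R M]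
    (hB : ∀ x ∈ B, ∀ y ∈ B, a • x + b • y ∈ B) {x y : M}
    (hx : x ∈ closure B) (hy : y ∈ closure B) : a • x + b • y ∈ closure B :=
  map_mem_closure₂ (f := fun u v => a • u + b • v) (by fun_prop) hx hy hB

end AffineCombination

theorem interior_closure_convex_general {X : Type*} [AddCommGroup X] [Module D X]
    [TopologicalSpace X] [ContinuousAdd X] [ContinuousSMul D X]
    (B : Set X) (hB : H2Convex B) :
    H2Convex (interior B) ∧ H2Convex (closure B) := by
  constructor <;> intro x hx y hy c hc0 hc1
  · exact smul_add_smul_mem_interior (add_sub_cancel c 1) (hB · · · · c hc0 hc1) hx hy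
  · exact smul_add_smul_mem_closure (hB · · · · c hc0 hc1) hx hy

/-- For an `H₂`-convex set `B` in a topological `H₂`-module, both the interior and
the closure of `B` are `H₂`-convex. -/
theorem interior_closure_convex {X : Type*} [AddCommGroup X] [Module D X]
    [TopologicalSpace X] [T2Space X] [ContinuousAdd X] [ContinuousSMul D X]
    (B : Set X) (hB : H2Convex B) :
    H2Convex (interior B) ∧ H2Convex (closure B) :=
  interior_closure_convex_general B hB
end

section
/- Let B be an H₂-convex set in an H₂-module X such that 0 ∈ B. Then: (i) eᵢB + eⱼB ⊆ B for all i ≠ j in Fin 4; (ii) eᵢB + eⱼB + eₖB ⊆ B for all pairwise distinct i, j, k in Fin 4 (where + denotes the Minkowski sum of sets). -/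
open Pointwise

lemma e_nonneg (i : Fin 4) : (0 : D) ≤ e i := by
  intro k
  by_cases h : k = i <;> simp [e, Pi.single_apply, h]

lemma e_le_one (i : Fin 4) : e i ≤ 1 := by
  intro k
  by_cases h : k = i <;> simp [e, Pi.single_apply, h]

lemma one_sub_e_mul {i j : Fin 4} (h : i ≠ j) : (1 - e i) * e j = e j := by
  funext k
  by_cases hk : k = j
  · subst hk
    have hki : (k : Fin 4) ≠ i := fun hh => h hh.symm
    simp [e, Pi.single_apply, hki]
  · simp [e, Pi.single_apply, hk]

/-- For an `H₂`-convex set `B` containing `0`: (i) `eᵢB + eⱼB ⊆ B` for `i ≠ j`;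
(ii) `eᵢB + eⱼB + eₖB ⊆ B` for pairwise distinct `i, j, k`. -/
theorem sum_components_subset {X : Type*} [AddCommGroup X] [Module D X]
    (B : Set X) (hB : H2Convex B) (h0 : (0 : X) ∈ B) :
    (∀ i j : Fin 4, i ≠ j → e i • B + e j • B ⊆ B) ∧
      (∀ i j k : Fin 4, i ≠ j → j ≠ k → i ≠ k →
        e i • B + e j • B + e k • B ⊆ B) := by
  have mem_e : ∀ (i : Fin 4) (x : X), x ∈ B → e i • x ∈ B := by
    intro i x hx
    have := hB x hx 0 h0 (e i) (e_nonneg i) (e_le_one i)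
    simpa using this
  have pair : ∀ (i j : Fin 4), i ≠ j → ∀ a ∈ B, ∀ b ∈ B,
      e i • a + e j • b ∈ B := by
    intro i j hij a ha b hb
    have hjb : e j • b ∈ B := mem_e j b hb
    have := hB a ha (e j • b) hjb (e i) (e_nonneg i) (e_le_one i)
    rwa [smul_smul, one_sub_e_mul hij] at this
  constructor
  · intro i j hij z hz
    rcases hz with ⟨u, hu, v, hv, rfl⟩
    rcases hu with ⟨a, ha, rfl⟩
    rcases hv with ⟨b, hb, rfl⟩
    exact pair i j hij a ha b hb
  · intro i j k hij hjk hik z hz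
    rcases hz with ⟨w, hw, v, hv, rfl⟩
    rcases hw with ⟨u, hu, u', hu', rfl⟩
    rcases hu with ⟨a, ha, rfl⟩
    rcases hu' with ⟨b, hb, rfl⟩
    rcases hv with ⟨c, hc, rfl⟩
    have hbc : e j • b + e k • c ∈ B := pair j k hjk b hb c hc
    have := hB a ha (e j • b + e k • c) hbc (e i) (e_nonneg i) (e_le_one i)
    rwa [smul_add, smul_smul, smul_smul, one_sub_e_mul hij, one_sub_e_mul hik,
      ← add_assoc] at this
end

section
/- Let B be a set in a topological H₂-module X that is both H₂-balanced and H₂-convex. Then the closure of B is H₂-balanced; and if moreover 0 belongs to the interior of B, then the interior of B is H₂-balanced. -/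
open Pointwise

lemma key_decomp (t : ℝ) (ht : |t| ≤ 1) :
    ∃ lam s mm : ℝ, 0 < lam ∧ lam ≤ 1 ∧ |s| ≤ 1 ∧ |mm| ≤ 1 ∧ mm ≠ 0 ∧
      t = lam * mm + (1 - lam) * s := by
  by_cases h : |t| = 1/2
  · rcases abs_eq (by norm_num : (0:ℝ) ≤ 1/2) |>.mp h with rfl | rfl
    · exact ⟨3/4, 1, 1/3, by norm_num, by norm_num, by rw [abs_one], by rw [abs_of_nonneg] <;> norm_num, by norm_num, by norm_num⟩
    · exact ⟨3/4, -1, -(1/3), by norm_num, by norm_num, by rw [abs_neg, abs_one], by rw [abs_neg, abs_of_nonneg] <;> norm_num, by norm_num, by norm_num⟩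
  · rcases le_or_gt 0 t with h0 | h0
    · refine ⟨1/2, 1, 2*t - 1, by norm_num, by norm_num, by simp, ?_, ?_, by ring⟩
      · rw [abs_le]; constructor <;> [linarith [abs_le.mp ht]; linarith [abs_le.mp ht]]
      · intro hmm
        apply h
        rw [abs_of_nonneg h0]; linarith
    · refine ⟨1/2, -1, 2*t + 1, by norm_num, by norm_num, by simp, ?_, ?_, by ring⟩
      · rw [abs_le]; constructor <;> [linarith [abs_le.mp ht]; linarith [abs_le.mp ht]]
      · intro hmm
        apply h
        rw [abs_of_neg h0]; linarith

lemma aux_open {X : Type*} [AddCommGroup X] [Module D X] [TopologicalSpace X]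
    [ContinuousAdd X] [ContinuousSMul D X] (a ai : D) (h : ai * a = 1)
    (v : X) {U : Set X} (hU : IsOpen U) :
    IsOpen ((fun y => a • y + v) '' U) := by
  have he : (fun y => a • y + v) '' U = (fun y : X => ai • (y + -v)) ⁻¹' U := by
    ext y
    constructor
    · rintro ⟨u, hu, rfl⟩
      simpa [add_assoc, smul_smul, h] using hu
    · intro hy
      refine ⟨ai • (y + -v), hy, ?_⟩
      have h' : a * ai = 1 := by rw [mul_comm]; exact h
      simp [smul_smul, h']
  rw [he]
  exact hU.preimage (Continuous.const_smul (continuous_id.add continuous_const) ai)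

/-- For a set `B` that is both `H₂`-balanced and `H₂`-convex in a topological
`H₂`-module, the closure of `B` is `H₂`-balanced, and so is the interior of `B`
provided `0` lies in the interior of `B`. -/
theorem closure_interior_balanced {X : Type*} [AddCommGroup X] [Module D X]
    [TopologicalSpace X] [T2Space X] [ContinuousAdd X] [ContinuousSMul D X]
    (B : Set X) (hbal : H2Balanced B) (hconv : H2Convex B) :
    H2Balanced (closure B) ∧
      ((0 : X) ∈ interior B → H2Balanced (interior B)) := by
  constructor
  · intro x hx c hc
    have hmaps : Set.MapsTo (fun y : X => c • y) B B := fun y hy => hbal y hy c hc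
    exact hmaps.closure (Continuous.const_smul continuous_id c) hx
  · intro _ x hx c hc
    have hkey := fun i => key_decomp (c i) (hc i)
    choose lam s mm hlam0 hlam1 hs hmm hmm0 heq using hkey
    -- m • x is in the interior
    set U := interior B with hU
    have hUopen : IsOpen U := isOpen_interior
    have hxB : x ∈ B := interior_subset hx
    have hmmabs : dabs mm ≤ 1 := fun i => by simpa [dabs] using hmm i
    have hsabs : dabs s ≤ 1 := fun i => by simpa [dabs] using hs i
    have hmminv : (fun i => (mm i)⁻¹) * mm = 1 := by
      funext i
      exact inv_mul_cancel₀ (hmm0 i)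
    have hmopen : IsOpen ((fun y : X => mm • y + 0) '' U) :=
      aux_open mm (fun i => (mm i)⁻¹) hmminv 0 hUopen
    have hmsub : ((fun y : X => mm • y + 0) '' U) ⊆ U := by
      apply interior_maximal _ hmopen
      rintro _ ⟨u, hu, rfl⟩
      simpa using hbal u (interior_subset hu) mm hmmabs
    have hmx : mm • x ∈ U := by
      have : mm • x + 0 ∈ (fun y : X => mm • y + 0) '' U := ⟨x, hx, rfl⟩
      simpa using hmsub this
    -- s • x is in B
    have hsx : s • x ∈ B := hbal x hxB s hsabs
    -- the convex image
    have hlaminv : (fun i => (lam i)⁻¹) * lam = 1 := by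
      funext i
      exact inv_mul_cancel₀ (ne_of_gt (hlam0 i))
    have hcopen : IsOpen ((fun y : X => lam • y + (1 - lam) • (s • x)) '' U) :=
      aux_open lam (fun i => (lam i)⁻¹) hlaminv _ hUopen
    have hcsub : ((fun y : X => lam • y + (1 - lam) • (s • x)) '' U) ⊆ U := by
      apply interior_maximal _ hcopen
      rintro _ ⟨u, hu, rfl⟩
      exact hconv u (interior_subset hu) (s • x) hsx lam
        (fun i => le_of_lt (hlam0 i)) (fun i => hlam1 i)
    have hmem : c • x ∈ (fun y : X => lam • y + (1 - lam) • (s • x)) '' U := by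
      refine ⟨mm • x, hmx, ?_⟩
      simp only [smul_smul, ← add_smul]
      congr 1
      funext i
      simpa using (heq i).symm
    exact hcsub hmem
end

section
/- Let B be an H₂-absorbing set in an H₂-module X. Then for each i ∈ Fin 4, the set eᵢB = {eᵢ • b : b ∈ B} is absorbing in the real vector space eᵢX = {eᵢ • x : x ∈ X}: for every x ∈ eᵢX there exists a real ε > 0 such that a • x ∈ eᵢB for all real a with 0 ≤ a ≤ ε (where X is a real vector space via the ring homomorphism ℝ → D sending r to the constant function r). -/
open Pointwise

/-- For an `H₂`-absorbing set `B` and each idempotent `eᵢ`, the set `eᵢB` is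
absorbing in the real vector space `eᵢX`. -/
theorem absorbing_components {X : Type*} [AddCommGroup X] [Module D X]
    (B : Set X) (hB : H2Absorbing B) (i : Fin 4) :
    ∀ x ∈ e i • (Set.univ : Set X), ∃ ε : ℝ, 0 < ε ∧
      ∀ a : ℝ, 0 ≤ a → a ≤ ε → rconst a • x ∈ e i • B := by
  rintro x ⟨y, -, rfl⟩
  obtain ⟨ε, hε, hεB⟩ := hB y
  refine ⟨ε i, hε i, fun a ha haε => ?_⟩
  set c : D := Pi.single i a with hc
  have hc0 : (0 : D) ≤ c := by
    intro j
    by_cases h : j = i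
    · subst h; simpa [hc] using ha
    · simp [hc, Pi.single_eq_of_ne h]
  have hcε : c ≤ ε := by
    intro j
    by_cases h : j = i
    · subst h; simpa [hc] using haε
    · simp only [hc, Pi.single_eq_of_ne h]
      exact le_of_lt (hε j)
  have hcB : c • y ∈ B := hεB c hc0 hcε
  have key : rconst a • e i • y = e i • (c • y) := by
    rw [smul_smul, smul_smul]
    congr 1
    funext j
    by_cases h : j = i
    · subst h; simp [rconst, e, hc]
    · simp [rconst, e, hc, Pi.single_eq_of_ne h]
  rw [key]
  exact Set.smul_mem_smul_set hcB
end

section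
/- Let p be an H₂-valued seminorm on a topological H₂-module X, and set A = {x ∈ X : p(x) ≺ 1} and C = {x ∈ X : p(x) ⪯ 1}. Then the following statements are equivalent: (i) p is continuous; (ii) A is open; (iii) 0 belongs to the interior of A; (iv) 0 belongs to the interior of C; (v) p is continuous at 0; (vi) there exists a continuous H₂-valued seminorm q on X such that p(x) ⪯ q(x) for all x ∈ X. -/
open Pointwise

/-!
Subadditivity gives `|p y - p x| ⪯ p (y - x)` componentwise, so continuity of `p`
reduces to continuity at `0`; and `p (r⁻¹ • x) = r⁻¹ p x` turns a neighbourhood of `0`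
on which `p ⪯ 1` into one on which `p ⪯ r`. For the dominated case, `{q ≺ 1}` is an
open neighbourhood of `0` contained in `{p ≺ 1}`.
-/

open Filter Topology

lemma dabs_rconst {r : ℝ} (hr : 0 ≤ r) : dabs (rconst r) = rconst r :=
  funext fun _ => abs_of_nonneg hr

lemma isOpen_setOf_sLt {X : Type*} [TopologicalSpace X] {f : X → D} (hf : Continuous f)
    (b : D) : IsOpen {x | sLt (f x) b} := by
  have : {x | sLt (f x) b} = ⋂ i, {x | f x i < b i} := by
    ext x
    simp [sLt]
  rw [this]
  exact isOpen_iInter_of_finite fun i => isOpen_lt ((continuous_apply i).comp hf) continuous_const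

namespace IsH2Seminorm

variable {X : Type*} [AddCommGroup X] [Module D X] {p : X → D}

lemma map_zero (hp : IsH2Seminorm p) : p 0 = 0 := by
  have h0 : dabs (0 : D) = 0 := funext fun _ => abs_zero
  simpa [h0] using hp.1 0 0

lemma map_neg (hp : IsH2Seminorm p) (x : X) : p (-x) = p x := by
  have h1 : dabs (-1 : D) = 1 := funext fun _ => by simp [dabs]
  simpa [h1] using hp.1 (-1) x

lemma nonneg (hp : IsH2Seminorm p) (x : X) : 0 ≤ p x := by
  have h := hp.2 x (-x)
  rw [add_neg_cancel, hp.map_zero, hp.map_neg] at h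
  intro i
  have hi := h i
  simp only [Pi.add_apply, Pi.zero_apply] at hi ⊢
  linarith

lemma zero_mem_setOf_sLt_one (hp : IsH2Seminorm p) : (0 : X) ∈ {x | sLt (p x) 1} :=
  fun i => by simp [hp.map_zero]

lemma abs_sub_apply_le (hp : IsH2Seminorm p) (x y : X) (i : Fin 4) :
    |p x i - p y i| ≤ p (x - y) i := by
  have hxy := hp.2 (x - y) y
  have hyx := hp.2 (y - x) x
  rw [sub_add_cancel] at hxy hyx
  rw [← neg_sub, hp.map_neg] at hyx
  have hxy_i := hxy i
  have hyx_i := hyx i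
  simp only [Pi.add_apply] at hxy_i hyx_i
  rw [abs_sub_le_iff]
  constructor <;> linarith

lemma norm_sub_le (hp : IsH2Seminorm p) (x y : X) : ‖p x - p y‖ ≤ ‖p (x - y)‖ := by
  refine (pi_norm_le_iff_of_nonneg (norm_nonneg _)).2 fun i => ?_
  calc ‖(p x - p y) i‖ = |p x i - p y i| := rfl
    _ ≤ p (x - y) i := hp.abs_sub_apply_le x y i
    _ ≤ ‖p (x - y)‖ := (le_abs_self _).trans (norm_le_pi_norm (p (x - y)) i)

variable [TopologicalSpace X]

lemma continuous_of_continuousAt_zero [ContinuousAdd X] (hp : IsH2Seminorm p)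
    (h : ContinuousAt p 0) : Continuous p := by
  refine continuous_iff_continuousAt.2 fun x => tendsto_iff_norm_sub_tendsto_zero.2 ?_
  have hsub : Tendsto (fun y => y - x) (𝓝 x) (𝓝 0) := by
    simpa [sub_eq_add_neg] using (continuous_add_const (-x)).tendsto x
  have hnorm : Tendsto (fun y => ‖p (y - x)‖) (𝓝 x) (𝓝 0) := by
    simpa [ContinuousAt, hp.map_zero] using (h.tendsto.comp hsub).norm
  exact squeeze_zero (fun _ => norm_nonneg _) (fun y => hp.norm_sub_le y x) hnorm

lemma eventually_le_rconst [ContinuousConstSMul D X] (hp : IsH2Seminorm p)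
    (h : (0 : X) ∈ interior {x | p x ≤ 1}) {r : ℝ} (hr : 0 < r) :
    ∀ᶠ x in 𝓝 0, p x ≤ rconst r := by
  have hscale : Tendsto (fun x : X => rconst r⁻¹ • x) (𝓝 0) (𝓝 0) := by
    simpa using (continuous_const_smul (rconst r⁻¹)).tendsto (0 : X)
  filter_upwards [hscale (mem_interior_iff_mem_nhds.1 h)] with x hx i
  have hi := hx i
  rw [hp.1, dabs_rconst (inv_nonneg.2 hr.le)] at hi
  change r⁻¹ * p x i ≤ 1 at hi
  rwa [inv_mul_le_iff₀ hr, mul_one] at hi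

lemma continuousAt_zero_of_zero_mem_interior [ContinuousConstSMul D X] (hp : IsH2Seminorm p)
    (h : (0 : X) ∈ interior {x | p x ≤ 1}) : ContinuousAt p 0 := by
  rw [ContinuousAt, hp.map_zero, Metric.tendsto_nhds]
  intro ε hε
  filter_upwards [hp.eventually_le_rconst h (half_pos hε)] with x hx
  rw [dist_zero_right]
  have hbound : ‖p x‖ ≤ ε / 2 := (pi_norm_le_iff_of_nonneg (half_pos hε).le).2 fun i => by
    rw [Real.norm_of_nonneg (hp.nonneg x i)]
    exact hx i
  exact hbound.trans_lt (half_lt_self hε)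

lemma zero_mem_interior_setOf_sLt_one_of_le {q : X → D} (hq : IsH2Seminorm q)
    (hqc : Continuous q) (hle : ∀ x, p x ≤ q x) : (0 : X) ∈ interior {x | sLt (p x) 1} := by
  have hsub : {x | sLt (q x) 1} ⊆ {x | sLt (p x) 1} := fun x hx i => (hle x i).trans_lt (hx i)
  exact interior_mono hsub
    (mem_interior_iff_mem_nhds.2 ((isOpen_setOf_sLt hqc 1).mem_nhds hq.zero_mem_setOf_sLt_one))

end IsH2Seminorm

theorem seminorm_continuity_tfae_general {X : Type*} [AddCommGroup X] [Module D X]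
    [TopologicalSpace X] [ContinuousAdd X] [ContinuousSMul D X]
    (p : X → D) (hp : IsH2Seminorm p) :
    List.TFAE [Continuous p,
      IsOpen {x : X | sLt (p x) 1},
      (0 : X) ∈ interior {x : X | sLt (p x) 1},
      (0 : X) ∈ interior {x : X | p x ≤ 1},
      ContinuousAt p 0,
      ∃ q : X → D, IsH2Seminorm q ∧ Continuous q ∧ ∀ x : X, p x ≤ q x] := by
  tfae_have 1 → 2 := fun h => isOpen_setOf_sLt h 1
  tfae_have 2 → 3 := fun h => mem_interior_iff_mem_nhds.2 (h.mem_nhds hp.zero_mem_setOf_sLt_one)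
  tfae_have 3 → 4 := fun h => interior_mono (fun x (hx : sLt (p x) 1) i => (hx i).le) h
  tfae_have 4 → 5 := hp.continuousAt_zero_of_zero_mem_interior
  tfae_have 5 → 1 := hp.continuous_of_continuousAt_zero
  tfae_have 1 → 6 := fun h => ⟨p, hp, h, fun _ => le_rfl⟩
  tfae_have 6 → 3 := fun ⟨_, hq, hqc, hle⟩ => hq.zero_mem_interior_setOf_sLt_one_of_le hqc hle
  tfae_finish

/-- For an `H₂`-valued seminorm `p` on a topological `H₂`-module, with
`A = {x : p x ≺ 1}` and `C = {x : p x ⪯ 1}`, the following are equivalent: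
continuity of `p`; openness of `A`; `0 ∈ interior A`; `0 ∈ interior C`;
continuity of `p` at `0`; domination by some continuous `H₂`-valued seminorm. -/
theorem seminorm_continuity_tfae {X : Type*} [AddCommGroup X] [Module D X]
    [TopologicalSpace X] [T2Space X] [ContinuousAdd X] [ContinuousSMul D X]
    (p : X → D) (hp : IsH2Seminorm p) :
    List.TFAE [Continuous p,
      IsOpen {x : X | sLt (p x) 1},
      (0 : X) ∈ interior {x : X | sLt (p x) 1},
      (0 : X) ∈ interior {x : X | p x ≤ 1},
      ContinuousAt p 0,
      ∃ q : X → D, IsH2Seminorm q ∧ Continuous q ∧ ∀ x : X, p x ≤ q x] :=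
  seminorm_continuity_tfae_general p hp
end

section
/- Let X be an H₂-module and p an H₂-valued seminorm on X. Then both sets {x ∈ X : p(x) ≺ 1} and {x ∈ X : p(x) ⪯ 1} are H₂-convex, H₂-balanced and H₂-absorbing subsets of X. -/
open Pointwise

/-- For an `H₂`-valued seminorm `p`, the sets `{x : p x ≺ 1}` and `{x : p x ⪯ 1}`
are `H₂`-convex, `H₂`-balanced and `H₂`-absorbing. -/
theorem seminorm_balls {X : Type*} [AddCommGroup X] [Module D X]
    (p : X → D) (hp : IsH2Seminorm p) :
    (H2Convex {x : X | sLt (p x) 1} ∧ H2Balanced {x : X | sLt (p x) 1} ∧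
        H2Absorbing {x : X | sLt (p x) 1}) ∧
      (H2Convex {x : X | p x ≤ 1} ∧ H2Balanced {x : X | p x ≤ 1} ∧
        H2Absorbing {x : X | p x ≤ 1}) := by
  obtain ⟨hsmul, hadd⟩ := hp
  have hd0 : dabs (0 : D) = 0 := by funext i; simp [dabs]
  have h0 : p (0 : X) = 0 := by
    have := hsmul (0 : D) (0 : X)
    rw [zero_smul, hd0, zero_mul] at this
    exact this
  have hneg : ∀ x : X, p (-x) = p x := by
    intro x
    have := hsmul (-1 : D) x
    have hd : dabs (-1 : D) = 1 := by funext i; simp [dabs]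
    rw [neg_one_smul, hd, one_mul] at this
    exact this
  have hnn : ∀ (x : X) (i : Fin 4), 0 ≤ p x i := by
    intro x i
    have := hadd x (-x)
    rw [add_neg_cancel, h0, hneg] at this
    have := this i
    simp only [Pi.zero_apply, Pi.add_apply] at this
    linarith
  have hsm : ∀ (c : D) (x : X) (i : Fin 4), p (c • x) i = |c i| * p x i := by
    intro c x i
    rw [hsmul]
    simp [dabs]
  have key : ∀ (x y : X) (c : D) (i : Fin 4),
      p (c • x + (1 - c) • y) i ≤ |c i| * p x i + |1 - c i| * p y i := by
    intro x y c i
    have h := hadd (c • x) ((1 - c) • y) i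
    simp only [Pi.add_apply] at h
    rw [hsm c x i, hsm (1 - c) y i] at h
    simpa using h
  refine ⟨⟨?_, ?_, ?_⟩, ?_, ?_, ?_⟩
  · -- convex, strict
    intro x hx y hy c hc0 hc1 i
    have h := key x y c i
    have h1 := hx i; have h2 := hy i
    have h3 := hc0 i; have h4 := hc1 i
    simp only [Set.mem_setOf_eq, Pi.one_apply, Pi.zero_apply] at *
    rw [abs_of_nonneg h3, abs_of_nonneg (by linarith : (0:ℝ) ≤ 1 - c i)] at h
    rcases eq_or_lt_of_le h3 with h5 | h5
    · nlinarith [hnn x i, hnn y i]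
    · nlinarith [mul_lt_mul_of_pos_left h1 h5,
        mul_le_mul_of_nonneg_left h2.le (by linarith : (0:ℝ) ≤ 1 - c i)]
  · -- balanced, strict
    intro x hx c hc i
    have h := hsm c x i
    have h1 := hx i; have h2 := hc i
    simp only [Set.mem_setOf_eq, Pi.one_apply, dabs] at *
    nlinarith [abs_nonneg (c i), hnn x i]
  · -- absorbing, strict
    intro x
    refine ⟨fun i => 1 / (p x i + 1), fun i => by
      have := hnn x i; simp only [Pi.zero_apply]; positivity, ?_⟩
    intro c hc0 hc1 i
    have h := hsm c x i
    have h1 := hc0 i; have h2 := hc1 i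
    have hpx := hnn x i
    simp only [Set.mem_setOf_eq, Pi.one_apply, Pi.zero_apply] at *
    rw [abs_of_nonneg h1] at h
    have h3 : c i * (p x i + 1) ≤ 1 := by
      rw [div_eq_inv_mul, mul_one] at h2
      calc c i * (p x i + 1) ≤ (p x i + 1)⁻¹ * (p x i + 1) := by
            apply mul_le_mul_of_nonneg_right h2; linarith
        _ = 1 := by field_simp
    nlinarith
  · -- convex, weak
    intro x hx y hy c hc0 hc1 i
    have h := key x y c i
    have h1 := hx i; have h2 := hy i
    have h3 := hc0 i; have h4 := hc1 i
    simp only [Set.mem_setOf_eq, Pi.one_apply, Pi.zero_apply] at *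
    rw [abs_of_nonneg h3, abs_of_nonneg (by linarith : (0:ℝ) ≤ 1 - c i)] at h
    nlinarith [mul_nonneg h3 (by linarith : (0:ℝ) ≤ 1 - p x i),
      mul_nonneg (by linarith : (0:ℝ) ≤ 1 - c i) (by linarith : (0:ℝ) ≤ 1 - p y i)]
  · -- balanced, weak
    intro x hx c hc i
    have h := hsm c x i
    have h1 := hx i; have h2 := hc i
    simp only [Set.mem_setOf_eq, Pi.one_apply, dabs] at *
    nlinarith [abs_nonneg (c i), hnn x i]
  · -- absorbing, weak
    intro x
    refine ⟨fun i => 1 / (p x i + 1), fun i => by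
      have := hnn x i; simp only [Pi.zero_apply]; positivity, ?_⟩
    intro c hc0 hc1 i
    have h := hsm c x i
    have h1 := hc0 i; have h2 := hc1 i
    have hpx := hnn x i
    simp only [Set.mem_setOf_eq, Pi.one_apply, Pi.zero_apply] at *
    rw [abs_of_nonneg h1] at h
    have h3 : c i * (p x i + 1) ≤ 1 := by
      rw [div_eq_inv_mul, mul_one] at h2
      calc c i * (p x i + 1) ≤ (p x i + 1)⁻¹ * (p x i + 1) := by
            apply mul_le_mul_of_nonneg_right h2; linarith
        _ = 1 := by field_simp
    nlinarith
end

section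
/- Let B be an H₂-convex, H₂-balanced and H₂-absorbing subset of an H₂-module X. Then the H₂-valued Minkowski functional q_B is an H₂-valued seminorm on X: q_B(x + y) ⪯ q_B(x) + q_B(y) and q_B(λ • x) = |λ| * q_B(x) for all x, y ∈ X and λ ∈ D. -/
open Pointwise

/-- Auxiliary: an absorbing set admits some `α ≻ 0` with `x ∈ α • B`. -/
lemma aux_nonempty {X : Type*} [AddCommGroup X] [Module D X] {B : Set X}
    (habs : H2Absorbing B) (x : X) : ∃ α : D, sLt 0 α ∧ x ∈ α • B := by
  obtain ⟨ε, hε, h⟩ := habs x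
  have hb : ε • x ∈ B := h ε (fun i => (hε i).le) le_rfl
  refine ⟨ε⁻¹, fun i => inv_pos.2 (hε i), ?_⟩
  refine Set.mem_smul_set.2 ⟨ε • x, hb, ?_⟩
  have h1 : ε⁻¹ * ε = 1 := funext fun i => inv_mul_cancel₀ (hε i).ne'
  rw [smul_smul, h1, one_smul]

/-- Auxiliary: additivity of admissible scalars. -/
lemma aux_add {X : Type*} [AddCommGroup X] [Module D X] {B : Set X}
    (hconv : H2Convex B) {x y : X} {α β : D}
    (hα : sLt 0 α) (hx : x ∈ α • B) (hβ : sLt 0 β) (hy : y ∈ β • B) :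
    x + y ∈ (α + β) • B := by
  obtain ⟨a, ha, rfl⟩ := hx
  obtain ⟨b, hb, rfl⟩ := hy
  have hs : ∀ j, 0 < α j + β j := fun j => add_pos (hα j) (hβ j)
  set c : D := fun j => α j / (α j + β j) with hc
  have hc0 : (0 : D) ≤ c := fun j => div_nonneg (hα j).le (hs j).le
  have hc1 : c ≤ 1 := fun j => by
    rw [hc]; exact (div_le_one (hs j)).2 (le_add_of_nonneg_right (hβ j).le)
  refine Set.mem_smul_set.2 ⟨c • a + (1 - c) • b, hconv a ha b hb c hc0 hc1, ?_⟩
  have h1 : (α + β) * c = α := funext fun j => by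
    simp only [Pi.mul_apply, Pi.add_apply, hc]
    exact mul_div_cancel₀ _ (hs j).ne'
  have h2 : (α + β) * (1 - c) = β := funext fun j => by
    simp only [Pi.mul_apply, Pi.add_apply, Pi.sub_apply, Pi.one_apply, hc]
    rw [mul_sub, mul_one, mul_div_cancel₀ _ (hs j).ne', add_sub_cancel_left]
  rw [smul_add, smul_smul, smul_smul, h1, h2]

/-- Auxiliary: scaling of admissible scalars. -/
lemma aux_smul {X : Type*} [AddCommGroup X] [Module D X] {B : Set X}
    (hbal : H2Balanced B) {x : X} {α : D} (hα : sLt 0 α)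
    (hx : x ∈ α • B) (c : D) {δ : ℝ} (hδ : 0 < δ) :
    sLt 0 (fun j => if c j = 0 then δ else |c j| * α j) ∧
      c • x ∈ (fun j => if c j = 0 then δ else |c j| * α j : D) • B := by
  obtain ⟨a, ha, rfl⟩ := hx
  set β : D := fun j => if c j = 0 then δ else |c j| * α j with hβdef
  have hβ : sLt 0 β := fun j => by
    rw [hβdef]; dsimp only
    split_ifs with h
    · exact hδ
    · exact mul_pos (abs_pos.2 h) (hα j)
  refine ⟨hβ, ?_⟩
  set γ : D := fun j => c j * α j / β j with hγdef
  have hγ1 : dabs γ ≤ 1 := fun j => by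
    rw [hγdef, dabs]; dsimp only [Pi.one_apply]
    rw [hβdef]; dsimp only
    split_ifs with h
    · simp [h]
    · rw [abs_div, abs_mul, abs_mul, abs_abs, abs_of_pos (hα j)]
      exact div_self_le_one _
  have hγB : γ • a ∈ B := hbal a ha γ hγ1
  refine Set.mem_smul_set.2 ⟨γ • a, hγB, ?_⟩
  have h1 : β * γ = c * α := funext fun j => by
    simp only [Pi.mul_apply, hγdef]
    rw [mul_div_cancel₀ _ (hβ j).ne']
  rw [smul_smul, h1, ← smul_smul]

/-- Auxiliary: recovering an admissible scalar for `x` from one for `c • x`. -/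
lemma aux_update {X : Type*} [AddCommGroup X] [Module D X] {B : Set X}
    (hconv : H2Convex B) (hbal : H2Balanced B) {x : X} {c : D} {i : Fin 4}
    (hci : c i ≠ 0) {β α₀ : D} (hβ : sLt 0 β) (hcx : c • x ∈ β • B)
    (hα₀ : sLt 0 α₀) (hx : x ∈ α₀ • B) :
    sLt 0 (Function.update α₀ i (β i / |c i|)) ∧
      x ∈ (Function.update α₀ i (β i / |c i|)) • B := by
  obtain ⟨a, ha, hax0⟩ := hx
  obtain ⟨b, hb, hbx0⟩ := hcx
  have hax : α₀ • a = x := hax0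
  have hbx : β • b = c • x := hbx0
  set α₁ : D := Function.update α₀ i (β i / |c i|) with hα₁def
  have hα₁ : sLt 0 α₁ := fun j => by
    rw [hα₁def, Function.update_apply]
    split_ifs with h
    · exact div_pos (hβ i) (abs_pos.2 hci)
    · exact hα₀ j
  refine ⟨hα₁, ?_⟩
  set p : D := Pi.single i 1 with hpdef
  set s' : D := rconst (c i / |c i|) with hs'def
  have hs'1 : dabs s' ≤ 1 := fun j => by
    rw [hs'def, dabs, rconst]; dsimp only [Pi.one_apply]
    rw [abs_div, abs_abs]
    exact div_self_le_one _
  have hs'b : s' • b ∈ B := hbal b hb s' hs'1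
  have hp01 : ∀ j, p j = 0 ∨ p j = 1 := fun j => by
    rw [hpdef, Pi.single_apply]; split_ifs <;> simp
  have h0 : (0 : D) ≤ 1 - p := fun j => by
    simp only [Pi.sub_apply, Pi.one_apply, Pi.zero_apply]
    rcases hp01 j with h | h <;> rw [h] <;> norm_num
  have h1 : (1 : D) - p ≤ 1 := fun j => by
    simp only [Pi.sub_apply, Pi.one_apply]
    rcases hp01 j with h | h <;> rw [h] <;> norm_num
  have hb' : (1 - p) • a + p • (s' • b) ∈ B := by
    have := hconv a ha (s' • b) hs'b (1 - p) h0 h1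
    rwa [sub_sub_cancel] at this
  refine Set.mem_smul_set.2 ⟨(1 - p) • a + p • (s' • b), hb', ?_⟩
  set q : D := Pi.single i (c i)⁻¹ with hqdef
  have claim1 : α₁ * (1 - p) = (1 - p) * α₀ := funext fun j => by
    simp only [Pi.mul_apply, Pi.sub_apply, Pi.one_apply, hα₁def, hpdef,
      Function.update_apply, Pi.single_apply]
    split_ifs with h <;> ring
  have claim2 : α₁ * (p * s') = q * β := funext fun j => by
    simp only [Pi.mul_apply, hα₁def, hpdef, hqdef, hs'def, rconst,
      Function.update_apply, Pi.single_apply]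
    split_ifs with h
    · subst h
      rw [one_mul]
      rcases abs_choice (c j) with h' | h' <;> rw [h'] <;> field_simp
    · ring
  have hqc : q * c = p := funext fun j => by
    simp only [Pi.mul_apply, hqdef, hpdef, Pi.single_apply]
    split_ifs with h
    · subst h; exact inv_mul_cancel₀ hci
    · ring
  calc α₁ • ((1 - p) • a + p • (s' • b))
      = (α₁ * (1 - p)) • a + (α₁ * (p * s')) • b := by
        rw [smul_add, smul_smul, smul_smul, smul_smul, mul_assoc]
    _ = ((1 - p) * α₀) • a + (q * β) • b := by rw [claim1, claim2]
    _ = (1 - p) • x + q • (c • x) := by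
        rw [← smul_smul, ← smul_smul, hax, hbx]
    _ = (1 - p) • x + p • x := by rw [smul_smul, hqc]
    _ = x := by rw [← add_smul, sub_add_cancel, one_smul]

/-- The `H₂`-valued Minkowski functional of an `H₂`-convex, `H₂`-balanced and
`H₂`-absorbing set is an `H₂`-valued seminorm. -/
theorem minkowski_isSeminorm {X : Type*} [AddCommGroup X] [Module D X]
    (B : Set X) (hconv : H2Convex B) (hbal : H2Balanced B) (habs : H2Absorbing B) :
    (∀ x y : X, minkowski B (x + y) ≤ minkowski B x + minkowski B y) ∧
      ∀ c : D, ∀ x : X, minkowski B (c • x) = dabs c * minkowski B x := by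
  set S : X → Fin 4 → Set ℝ :=
    fun z i => {t : ℝ | ∃ α : D, sLt 0 α ∧ z ∈ α • B ∧ α i = t} with hS
  have hmink : ∀ z : X, ∀ i, minkowski B z i = sInf (S z i) := fun z i => rfl
  have hne : ∀ z : X, ∀ i : Fin 4, (S z i).Nonempty := by
    intro z i
    obtain ⟨α, hα, hz⟩ := aux_nonempty habs z
    exact ⟨α i, α, hα, hz, rfl⟩
  have hbdd : ∀ z : X, ∀ i : Fin 4, BddBelow (S z i) := by
    intro z i
    refine ⟨0, fun t ht => ?_⟩
    obtain ⟨α, hα, _, h⟩ := ht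
    exact h ▸ (hα i).le
  constructor
  · intro x y i
    simp only [Pi.add_apply, hmink]
    have key : ∀ s ∈ S x i, ∀ t ∈ S y i, sInf (S (x + y) i) ≤ s + t := by
      rintro s ⟨α, hα, hx, rfl⟩ t ⟨β, hβ, hy, rfl⟩
      exact csInf_le (hbdd _ i)
        ⟨α + β, fun j => add_pos (hα j) (hβ j), aux_add hconv hα hx hβ hy, rfl⟩
    have h1 : sInf (S (x + y) i) - sInf (S x i) ≤ sInf (S y i) := by
      refine le_csInf (hne y i) fun t ht => ?_
      have h2 : sInf (S (x + y) i) - t ≤ sInf (S x i) := by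
        refine le_csInf (hne x i) fun s hs => ?_
        have := key s hs t ht
        linarith
      linarith
    linarith
  · intro c x
    funext i
    simp only [Pi.mul_apply, hmink, dabs]
    by_cases hci : c i = 0
    · rw [hci, abs_zero, zero_mul]
      refine le_antisymm ?_ (le_csInf (hne _ i) fun t ht => by
        obtain ⟨α, hα, _, h⟩ := ht; exact h ▸ (hα i).le)
      refine le_of_forall_pos_le_add fun δ hδ => ?_
      obtain ⟨α, hα, hx⟩ := aux_nonempty habs x
      obtain ⟨hβ, hmem⟩ := aux_smul hbal hα hx c hδ
      have : sInf (S (c • x) i) ≤ δ := by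
        refine csInf_le (hbdd _ i) ⟨_, hβ, hmem, ?_⟩
        simp [hci]
      linarith
    · have hcpos : 0 < |c i| := abs_pos.2 hci
      refine le_antisymm ?_ ?_
      · -- sInf S(c•x) ≤ |c i| * sInf S x
        rw [← div_le_iff₀' hcpos]
        refine le_csInf (hne x i) fun s hs => ?_
        obtain ⟨α, hα, hx, rfl⟩ := hs
        rw [div_le_iff₀' hcpos]
        obtain ⟨hβ, hmem⟩ := aux_smul hbal hα hx c one_pos
        refine csInf_le (hbdd _ i) ⟨_, hβ, hmem, ?_⟩
        simp [hci]
      · -- |c i| * sInf S x ≤ sInf S(c•x)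
        refine le_csInf (hne _ i) fun t ht => ?_
        obtain ⟨β, hβ, hcx, rfl⟩ := ht
        obtain ⟨α₀, hα₀, hx⟩ := aux_nonempty habs x
        obtain ⟨hα₁, hmem⟩ := aux_update hconv hbal hci hβ hcx hα₀ hx
        have h3 : sInf (S x i) ≤ β i / |c i| := by
          refine csInf_le (hbdd _ i) ⟨_, hα₁, hmem, ?_⟩
          simp
        calc |c i| * sInf (S x i) ≤ |c i| * (β i / |c i|) := by
              exact mul_le_mul_of_nonneg_left h3 hcpos.le
          _ = β i := by field_simp
end

section
/- Let B be a bounded, H₂-convex, H₂-balanced and H₂-absorbing subset of a topological H₂-module (X, τ). Then the H₂-valued Minkowski functional q_B is an H₂-valued norm on X; in particular q_B(x) = 0 implies x = 0. -/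
open Pointwise

namespace MinkAux

lemma dinv_mul {α : D} (h : sLt 0 α) : α⁻¹ * α = 1 := by
  funext i; exact inv_mul_cancel₀ (ne_of_gt (h i))

lemma dmul_inv {α : D} (h : sLt 0 α) : α * α⁻¹ = 1 := by
  funext i; exact mul_inv_cancel₀ (ne_of_gt (h i))

lemma sLt_inv {α : D} (h : sLt 0 α) : sLt 0 α⁻¹ := fun i => by
  have := h i; simp only [Pi.zero_apply] at this ⊢
  rw [Pi.inv_apply]; exact inv_pos.mpr this

variable {X : Type*} [AddCommGroup X] [Module D X] {B : Set X}

lemma zero_mem (habs : H2Absorbing B) : (0 : X) ∈ B := by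
  obtain ⟨ε, hε, h⟩ := habs 0
  have := h 0 le_rfl (Pi.le_def.mpr fun i => (hε i).le)
  simpa using this

lemma exists_scale (habs : H2Absorbing B) (x : X) :
    ∃ α : D, sLt 0 α ∧ x ∈ α • B := by
  obtain ⟨ε, hε, h⟩ := habs x
  refine ⟨ε⁻¹, sLt_inv hε, ?_⟩
  refine Set.mem_smul_set.mpr ⟨ε • x, h ε (Pi.le_def.mpr fun i => (hε i).le) le_rfl, ?_⟩
  rw [smul_smul, dinv_mul hε, one_smul]

/-- the component set whose infimum defines the Minkowski functional -/
def T (B : Set X) (x : X) (i : Fin 4) : Set ℝ :=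
  {t : ℝ | ∃ α : D, sLt 0 α ∧ x ∈ α • B ∧ α i = t}

lemma mink_eq (x : X) (i : Fin 4) : minkowski B x i = sInf (T B x i) := rfl

lemma T_nonempty (habs : H2Absorbing B) (x : X) (i : Fin 4) : (T B x i).Nonempty := by
  obtain ⟨α, h1, h2⟩ := exists_scale habs x
  exact ⟨α i, α, h1, h2, rfl⟩

lemma T_bddBelow (x : X) (i : Fin 4) : BddBelow (T B x i) := by
  refine ⟨0, fun t ht => ?_⟩
  obtain ⟨α, h1, _, h3⟩ := ht
  exact h3 ▸ (h1 i).le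

lemma mink_nonneg (habs : H2Absorbing B) (x : X) (i : Fin 4) :
    0 ≤ minkowski B x i :=
  le_csInf (T_nonempty habs x i) fun t ht => by
    obtain ⟨α, h1, _, h3⟩ := ht; exact h3 ▸ (h1 i).le

lemma mink_le (x : X) {α : D} (h1 : sLt 0 α) (h2 : x ∈ α • B) (i : Fin 4) :
    minkowski B x i ≤ α i :=
  csInf_le (T_bddBelow x i) ⟨α, h1, h2, rfl⟩

lemma upward (hbal : H2Balanced B) {x : X} {α β : D}
    (h1 : sLt 0 α) (h2 : x ∈ α • B) (hβ : sLt 0 β) (hle : α ≤ β) : x ∈ β • B := by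
  obtain ⟨b, hb, hbx⟩ := Set.mem_smul_set.mp h2
  refine Set.mem_smul_set.mpr ⟨(β⁻¹ * α) • b, hbal b hb _ ?_, ?_⟩
  · refine Pi.le_def.mpr fun i => ?_
    have hβi : (0:ℝ) < β i := hβ i
    have hαi : (0:ℝ) < α i := h1 i
    show |(β⁻¹ * α) i| ≤ 1
    rw [Pi.mul_apply, Pi.inv_apply, abs_of_nonneg (by positivity), inv_mul_eq_div]
    exact div_le_one_of_le₀ (hle i) hβi.le
  · rw [smul_smul, ← mul_assoc, dmul_inv hβ, one_mul, hbx]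

/-- componentwise minimum -/
def dmin (a b : D) : D := fun i => min (a i) (b i)

lemma dmin_mem (hconv : H2Convex B) {x : X} {α β : D}
    (hα : sLt 0 α) (hαm : x ∈ α • B) (hβ : sLt 0 β) (hβm : x ∈ β • B) :
    sLt 0 (dmin α β) ∧ x ∈ dmin α β • B := by
  obtain ⟨b, hb, hbx⟩ := Set.mem_smul_set.mp hαm
  obtain ⟨b', hb', hbx'⟩ := Set.mem_smul_set.mp hβm
  set c : D := fun i => if α i ≤ β i then 1 else 0 with hc
  have h0c : (0 : D) ≤ c := Pi.le_def.mpr fun i => by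
    simp only [hc, Pi.zero_apply]; split <;> norm_num
  have h1c : c ≤ 1 := Pi.le_def.mpr fun i => by
    simp only [hc, Pi.one_apply]; split <;> norm_num
  refine ⟨fun i => lt_min (hα i) (hβ i), ?_⟩
  refine Set.mem_smul_set.mpr ⟨c • b + (1 - c) • b', hconv b hb b' hb' c h0c h1c, ?_⟩
  have e1 : dmin α β * c = c * α := by
    funext i
    simp only [dmin, Pi.mul_apply, hc]
    by_cases h : α i ≤ β i
    · simp [h, min_eq_left h]
    · simp [h]
  have e2 : dmin α β * (1 - c) = (1 - c) * β := by
    funext i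
    simp only [dmin, Pi.mul_apply, Pi.sub_apply, Pi.one_apply, hc]
    by_cases h : α i ≤ β i
    · simp [h]
    · simp [h, min_eq_right (le_of_not_ge h)]
  calc dmin α β • (c • b + (1 - c) • b')
      = (dmin α β * c) • b + (dmin α β * (1 - c)) • b' := by
        rw [smul_add, smul_smul, smul_smul]
    _ = c • (α • b) + (1 - c) • (β • b') := by rw [e1, e2, ← smul_smul, ← smul_smul]
    _ = x := by rw [hbx, hbx', ← add_smul]; simp

/-- key lemma: `x ∈ (q x + δ) • B` for every `δ ≻ 0`. -/
lemma mem_mink_add (hconv : H2Convex B) (hbal : H2Balanced B) (habs : H2Absorbing B)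
    (x : X) {δ : D} (hδ : sLt 0 δ) : x ∈ (minkowski B x + δ) • B := by
  have hkey : ∀ i : Fin 4, ∃ α : D, (sLt 0 α ∧ x ∈ α • B) ∧ α i < minkowski B x i + δ i := by
    intro i
    have hd : (0:ℝ) < δ i := hδ i
    have hlt : sInf (T B x i) < minkowski B x i + δ i := by
      rw [mink_eq]; linarith
    obtain ⟨t, ht, htlt⟩ := exists_lt_of_csInf_lt (T_nonempty habs x i) hlt
    obtain ⟨α, h1, h2, h3⟩ := ht
    exact ⟨α, ⟨h1, h2⟩, h3 ▸ htlt⟩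
  choose α hα hlt using hkey
  set γ : D := dmin (dmin (α 0) (α 1)) (dmin (α 2) (α 3)) with hγ
  have h01 := dmin_mem hconv (hα 0).1 (hα 0).2 (hα 1).1 (hα 1).2
  have h23 := dmin_mem hconv (hα 2).1 (hα 2).2 (hα 3).1 (hα 3).2
  have hγm : sLt 0 γ ∧ x ∈ γ • B := dmin_mem hconv h01.1 h01.2 h23.1 h23.2
  have hγle : ∀ j, γ j ≤ α j j := by
    intro j
    fin_cases j
    · exact le_trans (min_le_left _ _) (min_le_left _ _)
    · exact le_trans (min_le_left _ _) (min_le_right _ _)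
    · exact le_trans (min_le_right _ _) (min_le_left _ _)
    · exact le_trans (min_le_right _ _) (min_le_right _ _)
  have hpos : sLt 0 (minkowski B x + δ) := fun i => by
    have := mink_nonneg habs x i
    have := hδ i
    simp only [Pi.zero_apply, Pi.add_apply] at *
    linarith
  exact upward hbal hγm.1 hγm.2 hpos
    (Pi.le_def.mpr fun j => le_of_lt (lt_of_le_of_lt (hγle j) (hlt j)))

/-- triangle inequality -/
lemma mink_triangle (hconv : H2Convex B) (hbal : H2Balanced B) (habs : H2Absorbing B)
    (x y : X) (i : Fin 4) :
    minkowski B (x + y) i ≤ minkowski B x i + minkowski B y i := by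
  refine le_of_forall_pos_le_add fun ε hε => ?_
  set δ : D := rconst (ε / 2) with hδdef
  have hδ : sLt 0 δ := fun j => by
    show (0:ℝ) < ε / 2
    linarith
  have hx := mem_mink_add hconv hbal habs x hδ
  have hy := mem_mink_add hconv hbal habs y hδ
  set α : D := minkowski B x + δ with hα
  set β : D := minkowski B y + δ with hβ
  have hαp : sLt 0 α := fun j => by
    have h1 := mink_nonneg habs x j
    have h2 : (0:ℝ) < ε / 2 := by linarith
    show (0:ℝ) < minkowski B x j + ε / 2
    linarith
  have hβp : sLt 0 β := fun j => by
    have h1 := mink_nonneg habs y j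
    have h2 : (0:ℝ) < ε / 2 := by linarith
    show (0:ℝ) < minkowski B y j + ε / 2
    linarith
  have hsp : sLt 0 (α + β) := fun j => by
    have := hαp j; have := hβp j
    simp only [Pi.zero_apply, Pi.add_apply] at *
    linarith
  obtain ⟨b, hb, hbx⟩ := Set.mem_smul_set.mp hx
  obtain ⟨b', hb', hby⟩ := Set.mem_smul_set.mp hy
  set c : D := (α + β)⁻¹ * α with hcdef
  have h0c : (0 : D) ≤ c := Pi.le_def.mpr fun j => by
    have := hαp j; have := hsp j
    simp only [Pi.zero_apply, Pi.add_apply] at *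
    show (0:ℝ) ≤ ((α + β) j)⁻¹ * α j
    have : (0:ℝ) < (α + β) j := by simpa [Pi.add_apply] using hsp j
    positivity
  have h1c : c ≤ 1 := Pi.le_def.mpr fun j => by
    have h1 := hβp j
    have h2 : (0:ℝ) < (α + β) j := hsp j
    show ((α + β) j)⁻¹ * α j ≤ 1
    rw [inv_mul_eq_div, div_le_one h2]
    have : (α + β) j = α j + β j := rfl
    rw [this]
    have : (0:ℝ) < β j := h1
    linarith
  have hmem : x + y ∈ (α + β) • B := by
    refine Set.mem_smul_set.mpr ⟨c • b + (1 - c) • b', hconv b hb b' hb' c h0c h1c, ?_⟩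
    have e1 : (α + β) * c = α := by
      rw [hcdef, ← mul_assoc, dmul_inv hsp, one_mul]
    have e2 : (α + β) * (1 - c) = β := by
      rw [mul_sub, mul_one, e1, add_sub_cancel_left]
    rw [smul_add, smul_smul, smul_smul, e1, e2, hbx, hby]
  have := mink_le (B := B) (x + y) hsp hmem i
  calc minkowski B (x + y) i ≤ (α + β) i := this
    _ = minkowski B x i + minkowski B y i + ε := by
      show minkowski B x i + ε / 2 + (minkowski B y i + ε / 2) = _
      ring

lemma e_mul_e (i : Fin 4) : e i * e i = e i := by
  funext j
  simp only [e, Pi.mul_apply, Pi.single_apply]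
  split <;> norm_num

lemma dabs_e_le_one (i : Fin 4) : dabs (e i) ≤ 1 := Pi.le_def.mpr fun j => by
  show |e i j| ≤ 1
  simp only [e, Pi.single_apply]
  split <;> norm_num

lemma e_nonneg (i : Fin 4) : (0 : D) ≤ e i := Pi.le_def.mpr fun j => by
  show (0:ℝ) ≤ e i j
  simp only [e, Pi.single_apply]
  split <;> norm_num

lemma e_le_one (i : Fin 4) : e i ≤ 1 := Pi.le_def.mpr fun j => by
  show e i j ≤ 1
  simp only [e, Pi.single_apply]
  split <;> norm_num

/-- the `i`-th component of the Minkowski functional only depends on `e i • x`. -/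
lemma mink_comp_e (hconv : H2Convex B) (hbal : H2Balanced B) (habs : H2Absorbing B)
    (x : X) (i : Fin 4) : minkowski B (e i • x) i = minkowski B x i := by
  rw [mink_eq, mink_eq]
  congr 1
  ext t
  constructor
  · rintro ⟨β, hβ, hmem, hβi⟩
    obtain ⟨b, hb, hbe⟩ := Set.mem_smul_set.mp hmem
    obtain ⟨γ, hγ, hγm⟩ := exists_scale habs x
    obtain ⟨b', hb', hbx'⟩ := Set.mem_smul_set.mp hγm
    set α : D := e i * β + (1 - e i) * γ with hαdef
    have hα : sLt 0 α := fun j => by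
      show (0:ℝ) < e i j * β j + (1 - e i j) * γ j
      simp only [e, Pi.single_apply]
      by_cases hj : j = i
      · simp only [if_pos hj]
        have := hβ j
        simp only [Pi.zero_apply] at this
        linarith
      · simp only [if_neg hj]
        have := hγ j
        simp only [Pi.zero_apply] at this
        linarith
    have hαi : α i = β i := by
      show e i i * β i + (1 - e i i) * γ i = β i
      simp [e, Pi.single_apply]
    refine ⟨α, hα, ?_, hαi ▸ hβi⟩
    refine Set.mem_smul_set.mpr ⟨e i • b + (1 - e i) • b',
      hconv b hb b' hb' (e i) (e_nonneg i) (e_le_one i), ?_⟩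
    have e1 : α * e i = e i * β := by
      funext j
      show (e i j * β j + (1 - e i j) * γ j) * e i j = e i j * β j
      simp only [e, Pi.single_apply]
      rcases eq_or_ne j i with hj | hj
      · simp only [if_pos hj]; ring
      · simp only [if_neg hj]; ring
    have e2 : α * (1 - e i) = (1 - e i) * γ := by
      funext j
      show (e i j * β j + (1 - e i j) * γ j) * (1 - e i j) = (1 - e i j) * γ j
      simp only [e, Pi.single_apply]
      rcases eq_or_ne j i with hj | hj
      · simp only [if_pos hj]; ring
      · simp only [if_neg hj]; ring
    calc α • (e i • b + (1 - e i) • b')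
        = (α * e i) • b + (α * (1 - e i)) • b' := by rw [smul_add, smul_smul, smul_smul]
      _ = e i • (β • b) + (1 - e i) • (γ • b') := by
          rw [e1, e2, ← smul_smul, ← smul_smul]
      _ = e i • (e i • x) + (1 - e i) • x := by rw [hbe, hbx']
      _ = x := by
          rw [smul_smul, e_mul_e, ← add_smul]
          simp
  · rintro ⟨α, hα, hmem, hαi⟩
    obtain ⟨b, hb, hbx⟩ := Set.mem_smul_set.mp hmem
    refine ⟨α, hα, ?_, hαi⟩
    refine Set.mem_smul_set.mpr ⟨e i • b, hbal b hb (e i) (dabs_e_le_one i), ?_⟩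
    rw [smul_smul, mul_comm, ← smul_smul, hbx]

/-- homogeneity for scalars with all components nonzero: `≤` direction. -/
lemma mink_scale_le {d : D} (hbal : H2Balanced B) (habs : H2Absorbing B)
    (hd : ∀ j, d j ≠ 0) (x : X) (i : Fin 4) :
    minkowski B (d • x) i ≤ |d i| * minkowski B x i := by
  have habsd : (0:ℝ) < |d i| := abs_pos.mpr (hd i)
  rw [← div_le_iff₀' habsd]
  refine le_csInf (T_nonempty habs x i) ?_
  rintro t ⟨α, hα, hmem, hαi⟩
  rw [div_le_iff₀' habsd]
  obtain ⟨b, hb, hbx⟩ := Set.mem_smul_set.mp hmem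
  set s : D := fun j => d j / |d j| with hsdef
  have hs : dabs s ≤ 1 := Pi.le_def.mpr fun j =>
    le_of_eq (by
      show abs (d j / abs (d j)) = 1
      rw [abs_div, abs_abs, div_self (abs_ne_zero.mpr (hd j))])
  have hpos : sLt 0 (dabs d * α) := fun j => by
    show (0:ℝ) < |d j| * α j
    have := hα j
    have : (0:ℝ) < α j := hα j
    have := abs_pos.mpr (hd j)
    positivity
  have hmem2 : d • x ∈ (dabs d * α) • B := by
    refine Set.mem_smul_set.mpr ⟨s • b, hbal b hb s hs, ?_⟩
    rw [smul_smul]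
    have : dabs d * α * s = d * α := by
      funext j
      show abs (d j) * α j * (d j / abs (d j)) = d j * α j
      have h0 : abs (d j) ≠ 0 := abs_ne_zero.mpr (hd j)
      field_simp
    rw [this, ← smul_smul, hbx]
  have := mink_le (B := B) (d • x) hpos hmem2 i
  calc minkowski B (d • x) i ≤ (dabs d * α) i := this
    _ = |d i| * t := by rw [← hαi]; rfl

/-- homogeneity for scalars with all components nonzero. -/
lemma mink_scale (hbal : H2Balanced B) (habs : H2Absorbing B)
    {d : D} (hd : ∀ j, d j ≠ 0) (x : X) (i : Fin 4) :
    minkowski B (d • x) i = |d i| * minkowski B x i := by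
  refine le_antisymm (mink_scale_le hbal habs hd x i) ?_
  have hdinv : ∀ j, (d⁻¹ : D) j ≠ 0 := fun j => by
    show (d j)⁻¹ ≠ 0
    exact inv_ne_zero (hd j)
  have h2 := mink_scale_le hbal habs hdinv (d • x) i
  have hxx : d⁻¹ • (d • x) = x := by
    rw [smul_smul]
    have : (d⁻¹ : D) * d = 1 := by funext j; exact inv_mul_cancel₀ (hd j)
    rw [this, one_smul]
  rw [hxx] at h2
  have habsd : (0:ℝ) < |d i| := abs_pos.mpr (hd i)
  have : |(d⁻¹ : D) i| = |d i|⁻¹ := by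
    show |(d i)⁻¹| = |d i|⁻¹
    rw [abs_inv]
  rw [this] at h2
  calc |d i| * minkowski B x i ≤ |d i| * (|d i|⁻¹ * minkowski B (d • x) i) := by
        exact mul_le_mul_of_nonneg_left h2 habsd.le
    _ = minkowski B (d • x) i := by
        rw [← mul_assoc, mul_inv_cancel₀ (ne_of_gt habsd), one_mul]

lemma mink_zero (habs : H2Absorbing B) : minkowski B (0 : X) = 0 := by
  funext i
  have h0 : (0:ℝ) ≤ minkowski B (0:X) i := mink_nonneg habs 0 i
  have hub : ∀ ε : ℝ, 0 < ε → minkowski B (0:X) i ≤ ε := by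
    intro ε hε
    have hmem : (0:X) ∈ (rconst ε) • B :=
      Set.mem_smul_set.mpr ⟨0, zero_mem habs, smul_zero _⟩
    exact mink_le (B := B) 0 (fun j => hε) hmem i
  have : minkowski B (0:X) i ≤ 0 := by
    by_contra h
    push_neg at h
    have := hub (minkowski B (0:X) i / 2) (by linarith)
    linarith
  show minkowski B (0:X) i = (0:ℝ)
  linarith

/-- full homogeneity. -/
lemma mink_homog (hconv : H2Convex B) (hbal : H2Balanced B) (habs : H2Absorbing B)
    (c : D) (x : X) : minkowski B (c • x) = dabs c * minkowski B x := by
  funext i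
  show minkowski B (c • x) i = |c i| * minkowski B x i
  rcases eq_or_ne (c i) 0 with h | h
  · have he : e i • (c • x) = 0 := by
      rw [smul_smul]
      have : e i * c = 0 := by
        funext j
        show e i j * c j = 0
        simp only [e, Pi.single_apply]
        by_cases hj : j = i
        · subst hj; simp [h]
        · simp [hj]
      rw [this, zero_smul]
    rw [← mink_comp_e hconv hbal habs (c • x) i, he, mink_zero habs, h]
    simp
  · have key : e i • (c • x) = rconst (c i) • (e i • x) := by
      rw [smul_smul, smul_smul]
      congr 1
      funext j
      show e i j * c j = c i * e i j
      simp only [e, Pi.single_apply]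
      by_cases hj : j = i
      · subst hj; ring
      · simp [hj]
    have hrc : ∀ j, rconst (c i) j ≠ 0 := fun j => h
    calc minkowski B (c • x) i
        = minkowski B (e i • (c • x)) i := (mink_comp_e hconv hbal habs (c • x) i).symm
      _ = minkowski B (rconst (c i) • (e i • x)) i := by rw [key]
      _ = |rconst (c i) i| * minkowski B (e i • x) i := mink_scale hbal habs hrc _ i
      _ = |c i| * minkowski B x i := by
          rw [mink_comp_e hconv hbal habs x i]; rfl

/-- definiteness. -/
lemma mink_def_zero [TopologicalSpace X] [T2Space X]
    (hbd : H2Bounded B) (hconv : H2Convex B) (hbal : H2Balanced B)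
    (habs : H2Absorbing B) (x : X) (hq : minkowski B x = 0) : x = 0 := by
  by_contra hx
  have hU : ({x}ᶜ : Set X) ∈ nhds (0 : X) :=
    isOpen_compl_singleton.mem_nhds (by simpa using (Ne.symm hx))
  obtain ⟨c, hc, hsub⟩ := hbd _ hU
  have hmem : x ∈ (minkowski B x + c⁻¹) • B :=
    mem_mink_add hconv hbal habs x (sLt_inv hc)
  rw [hq, zero_add] at hmem
  obtain ⟨b, hb, hbx⟩ := Set.mem_smul_set.mp hmem
  obtain ⟨u, hu, hub⟩ := Set.mem_smul_set.mp (hsub hb)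
  have : x = u := by
    rw [← hbx, ← hub, smul_smul, dinv_mul hc, one_smul]
  exact hu (by rw [← this]; exact rfl)

end MinkAux

/-- The `H₂`-valued Minkowski functional of a bounded, `H₂`-convex, `H₂`-balanced
and `H₂`-absorbing subset of a topological `H₂`-module is an `H₂`-valued norm;
in particular `q_B x = 0` implies `x = 0`. -/
theorem minkowski_isNorm {X : Type*} [AddCommGroup X] [Module D X]
    [TopologicalSpace X] [T2Space X] [ContinuousAdd X] [ContinuousSMul D X]
    (B : Set X) (hbd : H2Bounded B) (hconv : H2Convex B) (hbal : H2Balanced B)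
    (habs : H2Absorbing B) :
    IsH2Norm (minkowski B) := by
  refine ⟨fun x => ⟨MinkAux.mink_def_zero hbd hconv hbal habs x, ?_⟩,
    MinkAux.mink_homog hconv hbal habs,
    fun x y => Pi.le_def.mpr fun i => MinkAux.mink_triangle hconv hbal habs x y i⟩
  rintro rfl
  exact MinkAux.mink_zero habs
end

section
/- A topological H₂-module (X, τ) is H₂-normable (i.e. there exists an H₂-valued norm N on X such that the balls {y ∈ X : N(y − x) ≺ ε}, for x ∈ X and ε ∈ D with 0 ≺ ε, form a basis of the topology τ) if and only if X contains a bounded H₂-convex neighbourhood of 0. -/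
open Pointwise

/-!
Restricting scalars along `ℝ → D` makes `X` a real topological vector space, in which a bounded
`H₂`-convex neighbourhood `B` of `0` is bounded and convex. By Kolmogorov's argument the gauge `q`
of the symmetric set `B ∩ -B` is a continuous seminorm whose balls form a base at `0`. Splitting
along the idempotents, `N x = (q (eᵢ • x))ᵢ` is an `H₂`-norm, since `c` acts on `eᵢ • X` as the
real scalar `cᵢ`; and `x = ∑ eᵢ • x` gives `q ≤ ∑ᵢ Nᵢ`, so the balls of `N` still form a base at
`0`. Conversely, the unit ball of an `H₂`-norm inducing the topology is a bounded `H₂`-convex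
neighbourhood of `0`.
-/

open Filter Topology

lemma exists_ball_smul_subset {R X : Type*} [PseudoMetricSpace R] [Zero R] [Zero X]
    [TopologicalSpace X] [SMulZeroClass R X] [ContinuousSMul R X] {V : Set X}
    (hV : V ∈ 𝓝 (0 : X)) :
    ∃ ε > 0, ∃ W ∈ 𝓝 (0 : X), ∀ d ∈ Metric.ball (0 : R) ε, ∀ w ∈ W, d • w ∈ V := by
  have hsmul : (fun p : R × X => p.1 • p.2) ⁻¹' V ∈ 𝓝 ((0 : R), (0 : X)) :=
    continuous_smul.continuousAt.preimage_mem_nhds (by rwa [smul_zero])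
  obtain ⟨s, hs, W, hW, hsW⟩ := mem_nhds_prod_iff.1 hsmul
  obtain ⟨ε, hε, hεs⟩ := Metric.mem_nhds_iff.1 hs
  exact ⟨ε, hε, W, hW, fun d hd w hw => hsW (Set.mk_mem_prod (hεs hd) hw)⟩

lemma sLt_zero_one : sLt 0 1 := fun _ => zero_lt_one

lemma dabs_of_nonneg {c : D} (hc : 0 ≤ c) : dabs c = c :=
  funext fun i => abs_of_nonneg (hc i)

lemma sum_e_smul {X : Type*} [AddCommGroup X] [Module D X] (x : X) : ∑ i, e i • x = x := by
  rw [← Finset.sum_smul, show ∑ i, e i = 1 from Finset.univ_sum_single 1, one_smul]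

section Seminorm

variable {X : Type*} [AddCommGroup X] [Module D X] {p : X → D}

namespace IsH2Seminorm

lemma map_sub_le (hp : IsH2Seminorm p) (x y : X) : p (x - y) ≤ p x + p y := by
  simpa only [sub_eq_add_neg, hp.map_neg] using hp.2 x (-y)

lemma h2Convex_ball_one (hp : IsH2Seminorm p) : H2Convex {y | sLt (p y) 1} := by
  intro x hx y hy c hc0 hc1 i
  have hcomb : p (c • x + (1 - c) • y) ≤ c * p x + (1 - c) * p y := by
    simpa only [hp.1, dabs_of_nonneg hc0, dabs_of_nonneg (sub_nonneg.2 hc1)]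
      using hp.2 (c • x) ((1 - c) • y)
  calc p (c • x + (1 - c) • y) i ≤ c i * p x i + (1 - c i) * p y i := hcomb i
    _ < 1 := convex_Iio (1 : ℝ) (hx i) (hy i) (hc0 i) (sub_nonneg.2 (hc1 i)) (by ring)

variable [TopologicalSpace X]

lemma ball_subset_of_isTopologicalBasis (hp : IsH2Seminorm p)
    (hB : TopologicalSpace.IsTopologicalBasis
      {s : Set X | ∃ x : X, ∃ ε : D, sLt 0 ε ∧ s = {y : X | sLt (p (y - x)) ε}})
    {U : Set X} (hU : U ∈ 𝓝 (0 : X)) :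
    ∃ δ : D, sLt 0 δ ∧ {y | sLt (p y) δ} ⊆ U := by
  obtain ⟨_, ⟨x, ε, -, rfl⟩, h0, hsub⟩ := hB.mem_nhds_iff.1 hU
  have hx : sLt (p x) ε := by simpa [hp.map_neg] using h0
  refine ⟨ε - p x, fun i => sub_pos.2 (hx i), fun y hy => hsub fun i => ?_⟩
  calc p (y - x) i ≤ p y i + p x i := hp.map_sub_le y x i
    _ < ε i := by linarith [hy i, show (ε - p x) i = ε i - p x i from rfl]

lemma h2Bounded_ball_one (hp : IsH2Seminorm p)
    (hsmall : ∀ U ∈ 𝓝 (0 : X), ∃ δ : D, sLt 0 δ ∧ {y | sLt (p y) δ} ⊆ U) :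
    H2Bounded {y | sLt (p y) 1} := by
  intro U hU
  obtain ⟨δ, hδ, hsub⟩ := hsmall U hU
  refine ⟨δ⁻¹, fun i => inv_pos.2 (hδ i), fun y hy => ⟨δ • y, hsub fun i => ?_, ?_⟩⟩
  · rw [hp.1]
    exact (mul_lt_of_lt_one_right (abs_pos.2 (hδ i).ne') (hy i)).trans_eq (abs_of_pos (hδ i))
  · show δ⁻¹ • δ • y = y
    rw [smul_smul, show δ⁻¹ * δ = 1 from funext fun i => inv_mul_cancel₀ (hδ i).ne', one_smul]

lemma isTopologicalBasis_balls [ContinuousAdd X] (hp : IsH2Seminorm p) (hcont : Continuous p)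
    (hsmall : ∀ U ∈ 𝓝 (0 : X), ∃ δ : D, sLt 0 δ ∧ {y | sLt (p y) δ} ⊆ U) :
    TopologicalSpace.IsTopologicalBasis
      {s : Set X | ∃ x : X, ∃ ε : D, sLt 0 ε ∧ s = {y : X | sLt (p (y - x)) ε}} := by
  refine TopologicalSpace.isTopologicalBasis_of_isOpen_of_nhds ?_ ?_
  · rintro _ ⟨x, ε, -, rfl⟩
    have hpx : Continuous fun y => p (y - x) := by
      simp only [sub_eq_add_neg]
      exact hcont.comp (continuous_add_const (-x))
    have hball : {y | sLt (p (y - x)) ε} = ⋂ i, {y | p (y - x) i < ε i} := by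
      ext; simp [sLt]
    rw [hball]
    exact isOpen_iInter_of_finite fun i =>
      isOpen_lt ((continuous_apply i).comp hpx) continuous_const
  · intro a u ha hu
    have hU : (· + a) ⁻¹' u ∈ 𝓝 (0 : X) :=
      (continuous_add_const a).continuousAt.preimage_mem_nhds (by simpa using hu.mem_nhds ha)
    obtain ⟨δ, hδ, hsub⟩ := hsmall _ hU
    refine ⟨_, ⟨a, δ, hδ, rfl⟩, by simpa [hp.map_zero] using hδ, fun y hy => ?_⟩
    simpa using hsub hy

lemma isH2Norm [T1Space X] (hp : IsH2Seminorm p)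
    (hsmall : ∀ U ∈ 𝓝 (0 : X), ∃ δ : D, sLt 0 δ ∧ {y | sLt (p y) δ} ⊆ U) : IsH2Norm p := by
  refine ⟨fun x => ⟨fun hx => ?_, fun hx => hx ▸ hp.map_zero⟩, hp.1, hp.2⟩
  refine pure_le_nhds_iff.1 (pure_le_iff.2 fun U hU => ?_)
  obtain ⟨δ, hδ, hsub⟩ := hsmall U hU
  exact hsub (by simpa [hx] using hδ)

end IsH2Seminorm

end Seminorm

section RealScalars

variable {X : Type*} [AddCommGroup X] [Module D X] [Module ℝ X]

lemma e_smul_smul [IsScalarTower ℝ D X] (i : Fin 4) (c : D) (x : X) :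
    e i • c • x = c i • e i • x := by
  rw [smul_smul, ← smul_assoc]
  congr 1
  ext j
  by_cases hj : j = i
  · subst hj; simp [e]
  · simp [e, hj]

lemma H2Convex.convex [IsScalarTower ℝ D X] {B : Set X} (hB : H2Convex B) : Convex ℝ B := by
  intro x hx y hy a b ha hb hab
  have h := hB x hx y hy (algebraMap ℝ D a) (fun _ => ha) (fun _ => by simp; linarith)
  rwa [← map_one (algebraMap ℝ D), ← map_sub, ← hab, add_sub_cancel_left, algebraMap_smul,
    algebraMap_smul] at h

lemma H2Bounded.isVonNBounded [IsScalarTower ℝ D X] [TopologicalSpace X] [ContinuousSMul D X]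
    {A : Set X} (hA : H2Bounded A) : Bornology.IsVonNBounded ℝ A := by
  intro V hV
  obtain ⟨ε, hε, W, hW, hWV⟩ := exists_ball_smul_subset (R := D) hV
  obtain ⟨c, -, hc⟩ := hA W hW
  refine Absorbs.of_norm ⟨‖c‖ / ε + 1, fun a ha x hx => ?_⟩
  obtain ⟨w, hw, rfl⟩ := hc hx
  have hca : ‖c‖ < ε * ‖a‖ := by
    rw [← div_lt_iff₀' hε]
    linarith
  have ha0 : a ≠ 0 := norm_pos_iff.1 (pos_of_mul_pos_right ((norm_nonneg c).trans_lt hca) hε.le)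
  refine ⟨(a⁻¹ • c) • w, hWV _ ?_ w hw, ?_⟩
  · rw [mem_ball_zero_iff, norm_smul, norm_inv, inv_mul_lt_iff₀ (norm_pos_iff.2 ha0), mul_comm]
    exact hca
  · show a • (a⁻¹ • c) • w = c • w
    rw [← smul_assoc, smul_smul, mul_inv_cancel₀ ha0, one_smul]

noncomputable def Seminorm.toH2 (q : Seminorm ℝ X) (x : X) : D := fun i => q (e i • x)

namespace Seminorm

variable (q : Seminorm ℝ X)

lemma isH2Seminorm_toH2 [IsScalarTower ℝ D X] : IsH2Seminorm q.toH2 := by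
  refine ⟨fun c x => funext fun i => ?_, fun x y i => ?_⟩
  · simp only [toH2, e_smul_smul, map_smul_eq_mul, Real.norm_eq_abs, Pi.mul_apply, dabs]
  · simp only [toH2, smul_add, Pi.add_apply]
    exact map_add_le_add q _ _

lemma le_sum_toH2 (x : X) : q x ≤ ∑ i, q.toH2 x i := by
  conv_lhs => rw [← sum_e_smul x]
  exact Finset.le_sum_of_subadditive q (map_zero q).le (map_add_le_add q) _ _

variable [TopologicalSpace X]

lemma continuous_toH2 [ContinuousConstSMul D X] (hq : Continuous q) : Continuous q.toH2 :=
  continuous_pi fun i => hq.comp (continuous_const_smul (e i))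

lemma toH2_ball_subset (hq : comap q (𝓝 0) ≤ 𝓝 0) {U : Set X} (hU : U ∈ 𝓝 (0 : X)) :
    ∃ δ : D, sLt 0 δ ∧ {y | sLt (q.toH2 y) δ} ⊆ U := by
  obtain ⟨r, hr, hrU⟩ := ((nhds_basis_zero_abs_lt ℝ).comap q).mem_iff.1 (hq hU)
  refine ⟨fun _ => r / 4, fun _ => by positivity, fun y hy => hrU ?_⟩
  show |q y| < r
  calc |q y| = q y := abs_of_nonneg (apply_nonneg q y)
    _ ≤ ∑ i, q.toH2 y i := q.le_sum_toH2 y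
    _ < ∑ _ : Fin 4, r / 4 := Finset.sum_lt_sum_of_nonempty Finset.univ_nonempty fun i _ => hy i
    _ = r := by simp; ring

end Seminorm

end RealScalars

/-- A topological `H₂`-module is `H₂`-normable (its topology has the balls of some
`H₂`-valued norm as a basis) if and only if it contains a bounded `H₂`-convex
neighbourhood of `0`. -/
theorem normable_iff_bounded_convex_nhd {X : Type*} [AddCommGroup X] [Module D X]
    [TopologicalSpace X] [T2Space X] [ContinuousAdd X] [ContinuousSMul D X] :
    (∃ N : X → D, IsH2Norm N ∧
        TopologicalSpace.IsTopologicalBasis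
          {s : Set X | ∃ x : X, ∃ ε : D, sLt 0 ε ∧
            s = {y : X | sLt (N (y - x)) ε}}) ↔
      ∃ B : Set X, B ∈ nhds (0 : X) ∧ H2Bounded B ∧ H2Convex B := by
  let : Module ℝ X := Module.compHom X (algebraMap ℝ D)
  have : IsScalarTower ℝ D X := .of_algebraMap_smul fun _ _ => rfl
  have : ContinuousSMul ℝ X := IsScalarTower.continuousSMul D
  have : ContinuousNeg X := ContinuousNeg.of_continuousConstSMul D X
  have : IsTopologicalAddGroup X := {}
  constructor
  · rintro ⟨N, hN, hbasis⟩
    have hp : IsH2Seminorm N := hN.2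
    refine ⟨{y | sLt (N y) 1}, ?_, hp.h2Bounded_ball_one fun U =>
      hp.ball_subset_of_isTopologicalBasis hbasis, hp.h2Convex_ball_one⟩
    exact (hbasis.isOpen ⟨0, 1, sLt_zero_one, by simp⟩).mem_nhds
      (by simpa [hp.map_zero] using sLt_zero_one)
  · rintro ⟨B, hB, hBbdd, hBconv⟩
    have hA : B ∩ -B ∈ 𝓝 (0 : X) := inter_mem hB (neg_mem_nhds_zero X hB)
    have hAconv : Convex ℝ (B ∩ -B) := hBconv.convex.inter hBconv.convex.neg
    have hAbal : Balanced ℝ (B ∩ -B) :=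
      (balanced_iff_neg_mem hAconv).2 fun x hx => ⟨hx.2, by simpa using hx.1⟩
    let q := gaugeSeminorm hAbal hAconv (absorbent_nhds_zero hA)
    have hsmall : ∀ U ∈ 𝓝 (0 : X), ∃ δ : D, sLt 0 δ ∧ {y | sLt (q.toH2 y) δ} ⊆ U :=
      fun U hU => q.toH2_ball_subset (comap_gauge_nhds_zero_le (absorbent_nhds_zero hA)
        (hBbdd.isVonNBounded.subset Set.inter_subset_left)) hU
    exact ⟨q.toH2, q.isH2Seminorm_toH2.isH2Norm hsmall,
      q.isH2Seminorm_toH2.isTopologicalBasis_balls (q.continuous_toH2 (continuous_gauge hAconv hA))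
        hsmall⟩
end
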